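/- arXiv:2604.11985 — 3 statements merged into one kernel-verified Lean document; each statement's English description precedes it below -/
import Mathlib

section
/- Let L > 0 and 0 < ℓ < ℓ₁ be real numbers. Let Q = {(x, y) ∈ ℝ² : 0 ≤ x ≤ L and 0 ≤ y ≤ ((ℓ₁ − ℓ)/L)·x + ℓ}, and define v : ℝ² → ℝ on Q by v(x, y) = ℓ·y / (((ℓ₁ − ℓ)/L)·x + ℓ). Then v is differentiable on Q and the Dirichlet integral ∫_Q [ (∂v/∂x)² + (∂v/∂y)² ] dx dy equals (ℓ²·L/(ℓ₁ − ℓ))·log(ℓ₁/ℓ) + (ℓ²·(ℓ₁ − ℓ)/(3L))·log(ℓ₁/ℓ). -/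
open MeasureTheory Set

/-!
Fibre the trapezoid by vertical segments. Over `x` the segment has height `D = a x + ℓ` with
`a = (ℓ₁ - ℓ)/L`, and `|∇v|² = ℓ² (a² y² / D⁴ + 1 / D²)` is a polynomial in `y` integrating to
`ℓ² (a²/3 + 1) / D`. Integrating `1/D` over `[0, L]` gives `log (ℓ₁/ℓ) / a`, and
`ℓ² (a²/3 + 1) / a` splits into the two coefficients of the claimed value.
-/

section RegionBetween

variable {α : Type*}

theorem isCompact_region_between_cc [TopologicalSpace α] [T2Space α] {f g : α → ℝ} {s : Set α}
    (hs : IsCompact s) (hf : Continuous f) (hg : Continuous g) :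
    IsCompact {p : α × ℝ | p.1 ∈ s ∧ p.2 ∈ Icc (f p.1) (g p.1)} := by
  obtain ⟨m, hm⟩ := hs.bddBelow_image hf.continuousOn
  obtain ⟨M, hM⟩ := hs.bddAbove_image hg.continuousOn
  refine (hs.prod (isCompact_Icc (a := m) (b := M))).of_isClosed_subset ?_ ?_
  · exact (hs.isClosed.preimage continuous_fst).inter
      ((isClosed_le (hf.comp continuous_fst) continuous_snd).inter
        (isClosed_le continuous_snd (hg.comp continuous_fst)))
  · rintro ⟨x, y⟩ ⟨hx, hfy, hyg⟩
    exact ⟨hx, (hm ⟨x, hx, rfl⟩).trans hfy, hyg.trans (hM ⟨x, hx, rfl⟩)⟩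

theorem setIntegral_region_between_cc [MeasurableSpace α] {μ : Measure α} [SFinite μ]
    {E : Type*} [NormedAddCommGroup E] [NormedSpace ℝ E]
    {f g : α → ℝ} {s : Set α} (hf : Measurable f) (hg : Measurable g) (hs : MeasurableSet s)
    {F : α × ℝ → E}
    (hF : IntegrableOn F {p : α × ℝ | p.1 ∈ s ∧ p.2 ∈ Icc (f p.1) (g p.1)} (μ.prod volume)) :
    ∫ p in {p : α × ℝ | p.1 ∈ s ∧ p.2 ∈ Icc (f p.1) (g p.1)}, F p ∂(μ.prod volume) =
      ∫ x in s, (∫ y in Icc (f x) (g x), F (x, y)) ∂μ := by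
  classical
  have hR := measurableSet_region_between_cc hf hg hs
  rw [← integral_indicator hR, integral_prod _ ((integrable_indicator_iff hR).2 hF),
    ← integral_indicator hs]
  congr 1 with x
  by_cases hx : x ∈ s
  · rw [indicator_of_mem hx, ← integral_indicator measurableSet_Icc]
    congr 1 with y
    rw [indicator_apply, indicator_apply]
    simp [hx]
  · simp [hx]

end RegionBetween

theorem intervalIntegral.integral_inv_mul_add {a b L : ℝ} (ha : a ≠ 0) (hb : 0 < b)
    (hbL : 0 < a * L + b) :
    ∫ x in (0 : ℝ)..L, (a * x + b)⁻¹ = Real.log ((a * L + b) / b) / a := by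
  rw [intervalIntegral.integral_comp_mul_add (a := 0) (b := L) (fun x : ℝ => x⁻¹) ha b, mul_zero,
    zero_add, integral_inv_of_pos hb hbL, smul_eq_mul, inv_mul_eq_div]

theorem mul_add_pos_of_mem_Icc {a b L x : ℝ} (hb : 0 < b) (hbL : 0 < a * L + b)
    (hx : x ∈ Icc 0 L) : 0 < a * x + b := by
  rcases le_total 0 a with ha | ha <;> nlinarith [hx.1, hx.2]

section DirichletDensity

variable {a b c : ℝ}

/-- `|∇v|²` for `v (x, y) = c y / (a x + b)`. -/
noncomputable def dirichletDensity (a b c : ℝ) (p : ℝ × ℝ) : ℝ :=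
  (c * a * p.2 / (a * p.1 + b) ^ 2) ^ 2 + (c / (a * p.1 + b)) ^ 2

theorem deriv_sq_add_deriv_sq_eq_dirichletDensity {p : ℝ × ℝ} (h : a * p.1 + b ≠ 0) :
    deriv (fun x => c * p.2 / (a * x + b)) p.1 ^ 2 +
        deriv (fun y => c * y / (a * p.1 + b)) p.2 ^ 2 =
      dirichletDensity a b c p := by
  have hx : HasDerivAt (fun x => c * p.2 / (a * x + b))
      (-(c * a * p.2) / (a * p.1 + b) ^ 2) p.1 := by
    have hD : HasDerivAt (fun x => a * x + b) a p.1 := by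
      simpa using ((hasDerivAt_id p.1).const_mul a).add_const b
    simpa [div_eq_mul_inv, neg_div, mul_comm, mul_left_comm, mul_assoc] using
      (hD.inv h).const_mul (c * p.2)
  have hy : HasDerivAt (fun y => c * y / (a * p.1 + b)) (c / (a * p.1 + b)) p.2 := by
    simpa using ((hasDerivAt_id p.2).const_mul c).div_const (a * p.1 + b)
  rw [hx.deriv, hy.deriv, dirichletDensity, neg_div, neg_sq]

theorem integral_dirichletDensity_fiber (x : ℝ) (h : a * x + b ≠ 0) :
    ∫ y in (0 : ℝ)..(a * x + b), dirichletDensity a b c (x, y) =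
      c ^ 2 * (a ^ 2 / 3 + 1) / (a * x + b) := by
  set D := a * x + b
  have hpoly : (fun y => dirichletDensity a b c (x, y)) =
      fun y => (c * a / D ^ 2) ^ 2 * y ^ 2 + (c / D) ^ 2 := by
    ext y; simp only [dirichletDensity, D]; ring
  rw [hpoly, intervalIntegral.integral_add
    (((continuous_pow 2).intervalIntegrable _ _).const_mul _) intervalIntegrable_const,
    intervalIntegral.integral_const_mul, integral_pow, intervalIntegral.integral_const, smul_eq_mul]
  field_simp
  ring

def trapezoid (a b L : ℝ) : Set (ℝ × ℝ) :=
  {p | p.1 ∈ Icc 0 L ∧ p.2 ∈ Icc 0 (a * p.1 + b)}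

theorem setIntegral_dirichletDensity_trapezoid {L : ℝ} (ha : a ≠ 0) (hb : 0 < b)
    (hbL : 0 < a * L + b) (hL : 0 ≤ L) :
    ∫ p in trapezoid a b L, dirichletDensity a b c p =
      c ^ 2 * (a ^ 2 / 3 + 1) / a * Real.log ((a * L + b) / b) := by
  have hpos (x : ℝ) (hx : x ∈ Icc 0 L) : 0 < a * x + b := mul_add_pos_of_mem_Icc hb hbL hx
  have hcont : ContinuousOn (dirichletDensity a b c) (trapezoid a b L) := by
    intro p hp
    have hD := (hpos p.1 hp.1).ne'
    apply ContinuousAt.continuousWithinAt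
    unfold dirichletDensity
    fun_prop (disch := simp [hD])
  have hint : IntegrableOn (dirichletDensity a b c) (trapezoid a b L) :=
    hcont.integrableOn_compact <| isCompact_region_between_cc isCompact_Icc continuous_const
      (by fun_prop : Continuous fun x => a * x + b)
  rw [trapezoid, Measure.volume_eq_prod] at hint ⊢
  rw [setIntegral_region_between_cc (f := fun _ => 0) (g := fun x => a * x + b) measurable_const
    (by fun_prop) measurableSet_Icc hint]
  calc ∫ x in Icc 0 L, (∫ y in Icc 0 (a * x + b), dirichletDensity a b c (x, y))
      = ∫ x in Icc 0 L, c ^ 2 * (a ^ 2 / 3 + 1) * (a * x + b)⁻¹ := by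
        refine setIntegral_congr_fun measurableSet_Icc fun x hx => ?_
        rw [integral_Icc_eq_integral_Ioc, ← intervalIntegral.integral_of_le (hpos x hx).le,
          integral_dirichletDensity_fiber x (hpos x hx).ne', div_eq_mul_inv]
    _ = c ^ 2 * (a ^ 2 / 3 + 1) * ∫ x in (0 : ℝ)..L, (a * x + b)⁻¹ := by
        rw [integral_Icc_eq_integral_Ioc, ← intervalIntegral.integral_of_le hL,
          intervalIntegral.integral_const_mul]
    _ = c ^ 2 * (a ^ 2 / 3 + 1) / a * Real.log ((a * L + b) / b) := by
        rw [intervalIntegral.integral_inv_mul_add ha hb hbL]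
        ring

end DirichletDensity

/-- Let `L > 0` and `0 < ℓ < ℓ₁`. On the Euclidean trapezoid
`Q = {(x,y) : 0 ≤ x ≤ L, 0 ≤ y ≤ ((ℓ₁ - ℓ)/L) x + ℓ}`, the function
`v (x,y) = ℓ y / (((ℓ₁ - ℓ)/L) x + ℓ)` is differentiable, and its Dirichlet integral
`∫_Q ((∂v/∂x)² + (∂v/∂y)²)` equals
`(ℓ² L/(ℓ₁ - ℓ)) log (ℓ₁/ℓ) + (ℓ² (ℓ₁ - ℓ)/(3 L)) log (ℓ₁/ℓ)`. -/
theorem stmt_3 (L ℓ ℓ₁ : ℝ) (hL : 0 < L) (hℓ : 0 < ℓ) (hℓ₁ : ℓ < ℓ₁)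
    (Q : Set (ℝ × ℝ))
    (hQ : Q = {p : ℝ × ℝ | 0 ≤ p.1 ∧ p.1 ≤ L ∧ 0 ≤ p.2 ∧
      p.2 ≤ ((ℓ₁ - ℓ) / L) * p.1 + ℓ})
    (v : ℝ × ℝ → ℝ)
    (hv : v = fun p : ℝ × ℝ => ℓ * p.2 / (((ℓ₁ - ℓ) / L) * p.1 + ℓ)) :
    DifferentiableOn ℝ v Q ∧
    (∫ p in Q, ((deriv (fun x : ℝ => v (x, p.2)) p.1) ^ 2 +
        (deriv (fun y : ℝ => v (p.1, y)) p.2) ^ 2)) =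
      ℓ ^ 2 * L / (ℓ₁ - ℓ) * Real.log (ℓ₁ / ℓ) +
        ℓ ^ 2 * (ℓ₁ - ℓ) / (3 * L) * Real.log (ℓ₁ / ℓ) := by
  subst hQ hv
  set a := (ℓ₁ - ℓ) / L with ha
  have haL : a * L + ℓ = ℓ₁ := by rw [ha]; field_simp; ring
  have hQ : {p : ℝ × ℝ | 0 ≤ p.1 ∧ p.1 ≤ L ∧ 0 ≤ p.2 ∧ p.2 ≤ a * p.1 + ℓ} = trapezoid a ℓ L := by
    ext p; simp [trapezoid, and_assoc]
  have hT : MeasurableSet (trapezoid a ℓ L) :=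
    measurableSet_region_between_cc measurable_const (by fun_prop : Measurable fun x => a * x + ℓ)
      measurableSet_Icc
  have hne (p : ℝ × ℝ) (hp : p ∈ trapezoid a ℓ L) : a * p.1 + ℓ ≠ 0 :=
    (mul_add_pos_of_mem_Icc hℓ (by linarith) hp.1).ne'
  rw [hQ]
  refine ⟨fun p hp => (by fun_prop (disch := exact hne p hp) :
    DifferentiableAt ℝ _ p).differentiableWithinAt, ?_⟩
  rw [setIntegral_congr_fun hT fun p hp =>
      deriv_sq_add_deriv_sq_eq_dirichletDensity (c := ℓ) (hne p hp),
    setIntegral_dirichletDensity_trapezoid (by positivity) hℓ (by linarith) hL.le, haL, ha]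
  field_simp
  ring
end

section
/- Let 0 < α ≤ 1 and set K(n) = ⌈n (log n)^α⌉ for n ≥ 2. Let C₀ > 0, let ψ : {1, 2, 3, …} → (0, ∞), and for each n ≥ 1 let A_n be a subset of E_n. Suppose there exists N such that ψ(n) + |A_n| ≤ K(n) for all n ≥ N. Let a assign a positive conductance to every edge of the rooted infinite binary tree with a(e) ≤ C₀ for every edge e, and a(e) ≤ ψ(n)/2^n for every e ∈ E_n \ A_n. Then there is no unit flow from the root of finite energy. -/
/-!
Every level `E_n` of the tree is a cutset through which the whole unit flow passes, so by
Cauchy–Schwarz the energy of the flow on `E_n` is at least `(∑_{e ∈ E_n} a e)⁻¹`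
(the Nash-Williams bound). The hypotheses give
`∑_{e ∈ E_n} a e ≤ ψ n + C₀ |A_n| ≤ max 1 C₀ · K n`, and `K n ≤ 2 n log n` because `α ≤ 1`.
Since `∑ 1 / (n log n)` diverges (Cauchy condensation), the energy is infinite.
-/

open Filter Finset

theorem Real.one_le_log_natCast {n : ℕ} (hn : 3 ≤ n) : 1 ≤ Real.log n := by
  rw [Real.le_log_iff_exp_le (by positivity)]
  calc Real.exp 1 ≤ 2.7182818286 := Real.exp_one_lt_d9.le
    _ ≤ 3 := by norm_num
    _ ≤ n := by exact_mod_cast hn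

theorem Real.not_summable_inv_natCast_mul_log :
    ¬ Summable fun n : ℕ => ((n : ℝ) * Real.log n)⁻¹ := by
  have hnonneg : 0 ≤ᶠ[atTop] fun n : ℕ => ((n : ℝ) * Real.log n)⁻¹ :=
    Eventually.of_forall fun n =>
      inv_nonneg.2 (mul_nonneg n.cast_nonneg (Real.log_natCast_nonneg n))
  have hanti : ∀ᶠ n : ℕ in atTop,
      ((n + 1 : ℕ) * Real.log (n + 1 : ℕ) : ℝ)⁻¹ ≤ ((n : ℝ) * Real.log n)⁻¹ := by
    filter_upwards [eventually_ge_atTop 2] with n hn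
    have hn' : (2 : ℝ) ≤ n := by exact_mod_cast hn
    have hlog : 0 < Real.log n := Real.log_pos (by linarith)
    have hlog_le : Real.log n ≤ Real.log (n + 1 : ℕ) :=
      Real.log_le_log (by linarith) (by push_cast; linarith)
    exact inv_anti₀ (by positivity)
      (mul_le_mul (by push_cast; linarith) hlog_le hlog.le (by positivity))
  rw [← summable_condensed_iff_of_eventually_nonneg hnonneg hanti]
  have hcondensed :
      (fun k : ℕ => (2 : ℝ) ^ k * (((2 ^ k : ℕ) : ℝ) * Real.log (2 ^ k : ℕ))⁻¹) =
        fun k : ℕ => (Real.log 2)⁻¹ * (k : ℝ)⁻¹ := by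
    ext k
    push_cast
    rw [Real.log_pow, mul_inv, ← mul_assoc, mul_inv_cancel₀ (by positivity), one_mul, mul_inv,
      mul_comm]
  rw [hcondensed, summable_mul_left_iff (inv_ne_zero (Real.log_pos one_lt_two).ne')]
  exact Real.not_summable_natCast_inv

theorem Real.natCeil_mul_log_rpow_le {α : ℝ} (hα : α ≤ 1) {n : ℕ} (hn : 3 ≤ n) :
    (⌈(n : ℝ) * Real.log n ^ α⌉₊ : ℝ) ≤ 2 * (n * Real.log n) := by
  have hlog := Real.one_le_log_natCast hn
  have hn' : (3 : ℝ) ≤ n := by exact_mod_cast hn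
  have hrpow : Real.log n ^ α ≤ Real.log n := by
    simpa using Real.rpow_le_rpow_of_exponent_le hlog hα
  have hceil := Nat.ceil_lt_add_one (a := (n : ℝ) * Real.log n ^ α)
    (mul_nonneg n.cast_nonneg (Real.rpow_nonneg (by linarith) α))
  nlinarith [mul_le_mul_of_nonneg_left hrpow n.cast_nonneg]

theorem not_summable_inv_of_le_mul_natCast_mul_log {s : ℕ → ℝ} {C : ℝ} (hC : 0 < C)
    (hs : ∀ᶠ n : ℕ in atTop, 0 < s n ∧ s n ≤ C * (n * Real.log n)) :
    ¬ Summable fun n => (s n)⁻¹ := by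
  intro hsum
  apply Real.not_summable_inv_natCast_mul_log
  refine (hsum.mul_left C).of_norm_bounded_eventually_nat ?_
  filter_upwards [hs, eventually_ge_atTop 3] with n ⟨hpos, hle⟩ hn
  have hlog := Real.one_le_log_natCast hn
  have hn' : (3 : ℝ) ≤ n := by exact_mod_cast hn
  rw [Real.norm_of_nonneg (by positivity)]
  calc ((n : ℝ) * Real.log n)⁻¹ = C * (C * (n * Real.log n))⁻¹ := by field_simp
    _ ≤ C * (s n)⁻¹ := by gcongr

namespace RootedBinaryTree

def level : ℕ → Finset (List Bool)
  | 0 => {[]}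
  | n + 1 => (level n).biUnion fun v => {v ++ [true], v ++ [false]}

theorem mem_level {n : ℕ} {v : List Bool} : v ∈ level n ↔ v.length = n := by
  induction n generalizing v with
  | zero => simp [level]
  | succ n ih =>
    simp only [level, mem_biUnion, ih, mem_insert, mem_singleton]
    constructor
    · rintro ⟨w, rfl, rfl | rfl⟩ <;> simp
    · intro hv
      rcases v.eq_nil_or_concat' with rfl | ⟨w, b, rfl⟩
      · simp at hv
      · exact ⟨w, by simpa using hv, by cases b <;> simp⟩

theorem ne_nil_of_mem_level {n : ℕ} {v : List Bool} (hv : v ∈ level n) (hn : n ≠ 0) :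
    v ≠ [] :=
  List.ne_nil_of_length_pos (by rw [mem_level.1 hv]; omega)

theorem sum_level_pos {a : List Bool → ℝ} (hapos : ∀ v : List Bool, v ≠ [] → 0 < a v)
    {n : ℕ} (hn : n ≠ 0) : 0 < ∑ v ∈ level n, a v :=
  sum_pos (fun v hv => hapos v (ne_nil_of_mem_level hv hn))
    ⟨List.replicate n true, mem_level.2 (List.length_replicate ..)⟩

theorem card_level_le (n : ℕ) : #(level n) ≤ 2 ^ n := by
  induction n with
  | zero => simp [level]
  | succ n ih =>
    calc #(level (n + 1))
        ≤ ∑ v ∈ level n, #({v ++ [true], v ++ [false]} : Finset (List Bool)) := card_biUnion_le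
      _ ≤ ∑ _v ∈ level n, 2 := sum_le_sum fun v _ => card_le_two
      _ = 2 * #(level n) := by rw [sum_const, smul_eq_mul, mul_comm]
      _ ≤ 2 ^ (n + 1) := by rw [pow_succ']; omega

theorem sum_level_succ {M : Type*} [AddCommMonoid M] (g : List Bool → M) (n : ℕ) :
    ∑ v ∈ level (n + 1), g v = ∑ v ∈ level n, (g (v ++ [true]) + g (v ++ [false])) := by
  rw [level, sum_biUnion]
  · exact sum_congr rfl fun v _ => sum_pair (by simp)
  · intro v hv w hw hvw
    simp only [Function.onFun, disjoint_left, mem_insert, mem_singleton]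
    rintro x (rfl | rfl) (h | h) <;>
      exact hvw (List.append_inj h (by rw [mem_level.1 hv, mem_level.1 hw])).1

theorem sum_level_succ_eq_of_flow {M : Type*} [AddCommMonoid M] {f : List Bool → M} {x : M}
    (hflow : ∀ v : List Bool, v ≠ [] → f v = f (v ++ [true]) + f (v ++ [false]))
    (hroot : f [true] + f [false] = x) (n : ℕ) : ∑ v ∈ level (n + 1), f v = x := by
  induction n with
  | zero => simpa [sum_level_succ, level] using hroot
  | succ n ih =>
    rw [sum_level_succ, ← ih]
    exact sum_congr rfl fun v hv => (hflow v (ne_nil_of_mem_level hv n.succ_ne_zero)).symm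

theorem tsum_sum_level_succ_le (g : List Bool → ENNReal) :
    ∑' n, ∑ v ∈ level (n + 1), g v ≤ ∑' v : {l : List Bool // l ≠ []}, g v := by
  let e : (Σ n, level (n + 1)) → {l : List Bool // l ≠ []} :=
    fun p => ⟨p.2, ne_nil_of_mem_level p.2.2 p.1.succ_ne_zero⟩
  have he : Function.Injective e := by
    rintro ⟨n, v, hv⟩ ⟨m, w, hw⟩ h
    obtain rfl : v = w := congrArg Subtype.val h
    obtain rfl : n = m := by have := (mem_level.1 hv).symm.trans (mem_level.1 hw); omega
    rfl
  calc ∑' n, ∑ v ∈ level (n + 1), g v = ∑' p : Σ n, level (n + 1), g p.2 := by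
        simp only [ENNReal.tsum_sigma', Finset.tsum_subtype]
    _ ≤ _ := ENNReal.tsum_comp_le_tsum_of_injective he fun v => g v

theorem summable_inv_sum_level_of_finite_energy {f a : List Bool → ℝ}
    (hapos : ∀ v : List Bool, v ≠ [] → 0 < a v)
    (hflow : ∀ v : List Bool, v ≠ [] → f v = f (v ++ [true]) + f (v ++ [false]))
    (hroot : f [true] + f [false] = 1)
    (hE : ∑' v : {l : List Bool // l ≠ []}, ENNReal.ofReal (f v.1 ^ 2 / a v.1) < ⊤) :
    Summable fun n => (∑ v ∈ level n, a v)⁻¹ := by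
  rw [← summable_nat_add_iff 1]
  have hapos' : ∀ n, ∀ v ∈ level (n + 1), 0 < a v := fun n v hv =>
    hapos v (ne_nil_of_mem_level hv n.succ_ne_zero)
  -- Cauchy–Schwarz on the cutset `level (n + 1)`, through which the whole unit flow passes
  have hcut : ∀ n, (∑ v ∈ level (n + 1), a v)⁻¹ ≤ ∑ v ∈ level (n + 1), f v ^ 2 / a v := by
    intro n
    simpa [sum_level_succ_eq_of_flow hflow hroot n] using
      sq_sum_div_le_sum_sq_div (level (n + 1)) f (hapos' n)
  have hle : ∑' n, ENNReal.ofReal (∑ v ∈ level (n + 1), a v)⁻¹ ≤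
      ∑' v : {l : List Bool // l ≠ []}, ENNReal.ofReal (f v.1 ^ 2 / a v.1) := by
    refine le_trans (ENNReal.tsum_le_tsum fun n => ?_)
      (tsum_sum_level_succ_le fun v => ENNReal.ofReal (f v ^ 2 / a v))
    rw [← ENNReal.ofReal_sum_of_nonneg fun v hv => div_nonneg (sq_nonneg _) (hapos' n v hv).le]
    exact ENNReal.ofReal_le_ofReal (hcut n)
  refine (ENNReal.summable_toReal (ne_top_of_le_ne_top hE.ne hle)).congr fun n => ?_
  exact ENNReal.toReal_ofReal (inv_nonneg.2 (sum_nonneg fun v hv => (hapos' n v hv).le))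

theorem sum_level_le {n : ℕ} {A : Set (List Bool)} {ψ C₀ : ℝ} {a : List Bool → ℝ}
    (hA : ∀ v ∈ A, v.length = n) (hψ : 0 ≤ ψ) (haC₀ : ∀ v ∈ A, a v ≤ C₀)
    (haψ : ∀ v : List Bool, v.length = n → v ∉ A → a v ≤ ψ / 2 ^ n) :
    ∑ v ∈ level n, a v ≤ ψ + C₀ * A.ncard := by
  classical
  have hcard : #((level n).filter (· ∈ A)) = A.ncard := by
    rw [← Set.ncard_coe_finset]
    congr
    ext v
    simpa [mem_level] using hA v
  have hin : ∑ v ∈ (level n).filter (· ∈ A), a v ≤ C₀ * A.ncard := by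
    rw [← hcard, mul_comm, ← nsmul_eq_mul]
    exact sum_le_card_nsmul _ _ _ fun v hv => haC₀ v (mem_filter.1 hv).2
  have hout : ∑ v ∈ (level n).filter (· ∉ A), a v ≤ ψ := by
    calc ∑ v ∈ (level n).filter (· ∉ A), a v ≤ #((level n).filter (· ∉ A)) • (ψ / 2 ^ n) :=
          sum_le_card_nsmul _ _ _ fun v hv =>
            haψ v (mem_level.1 (mem_filter.1 hv).1) (mem_filter.1 hv).2
      _ ≤ (2 ^ n) • (ψ / 2 ^ n) :=
          nsmul_le_nsmul_left (by positivity) ((card_filter_le _ _).trans (card_level_le n))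
      _ = ψ := by rw [nsmul_eq_mul]; push_cast; field_simp
  rw [← sum_filter_add_sum_filter_not (level n) (· ∈ A)]
  linarith

end RootedBinaryTree

open RootedBinaryTree

theorem stmt_14_general (α : ℝ) (hα1 : α ≤ 1)
    (C₀ : ℝ) (ψ : ℕ → ℝ) (hψpos : ∀ n : ℕ, 1 ≤ n → 0 < ψ n)
    (A : ℕ → Set (List Bool)) (hA : ∀ n : ℕ, ∀ v ∈ A n, v.length = n)
    (hK : ∃ N : ℕ, 2 ≤ N ∧ ∀ n : ℕ, N ≤ n →
      ψ n + ((A n).ncard : ℝ) ≤ (Nat.ceil ((n : ℝ) * Real.log n ^ α) : ℝ))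
    (a : List Bool → ℝ) (hapos : ∀ v : List Bool, v ≠ [] → 0 < a v)
    (haC₀ : ∀ v : List Bool, v ≠ [] → a v ≤ C₀)
    (haψ : ∀ n : ℕ, 1 ≤ n → ∀ v : List Bool, v.length = n → v ∉ A n →
      a v ≤ ψ n / 2 ^ n) :
    ¬ ∃ f : List Bool → ℝ,
        (∀ v : List Bool, v ≠ [] → f v = f (v ++ [true]) + f (v ++ [false])) ∧
        f [true] + f [false] = 1 ∧
        (∑' v : {l : List Bool // l ≠ []}, ENNReal.ofReal (f v.1 ^ 2 / a v.1)) < ⊤ := by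
  rintro ⟨f, hflow, hroot, hE⟩
  obtain ⟨N, -, hN⟩ := hK
  set c := max 1 C₀
  refine not_summable_inv_of_le_mul_natCast_mul_log (C := 2 * c) (by positivity) ?_
    (summable_inv_sum_level_of_finite_energy hapos hflow hroot hE)
  filter_upwards [eventually_ge_atTop (max N 3)] with n hn
  have hn1 : 1 ≤ n := by omega
  have hψ := hψpos n hn1
  refine ⟨sum_level_pos hapos (by omega), ?_⟩
  calc ∑ v ∈ level n, a v ≤ ψ n + C₀ * (A n).ncard :=
        sum_level_le (hA n) hψ.le
          (fun v hv => haC₀ v (List.ne_nil_of_length_pos (by rw [hA n v hv]; omega)))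
          (haψ n hn1)
    _ ≤ c * (ψ n + (A n).ncard) := by
        nlinarith [le_max_left 1 C₀, le_max_right 1 C₀, (A n).ncard.cast_nonneg (α := ℝ)]
    _ ≤ c * ⌈(n : ℝ) * Real.log n ^ α⌉₊ := by gcongr; exact hN n (le_of_max_le_left hn)
    _ ≤ c * (2 * (n * Real.log n)) := by
        gcongr; exact Real.natCeil_mul_log_rpow_le hα1 (le_of_max_le_right hn)
    _ = 2 * c * (n * Real.log n) := by ring

/-- Recurrence for the Cantor tree with few long cuffs (Theorem 1.5(i)): let
`0 < α ≤ 1`, `K n = ⌈n (log n)^α⌉`, `C₀ > 0`, `ψ : ℕ → (0,∞)`, and let `A n ⊆ E n`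
(edges of the rooted binary tree at level `n`, an edge being identified with the
nonempty binary string `v` of length `n` it leads to).  Assume `ψ n + |A n| ≤ K n` for
all large `n`.  If the conductances satisfy `a e ≤ C₀` everywhere and
`a e ≤ ψ n / 2 ^ n` for `e ∈ E n \ A n`, then there is no unit flow from the root of
finite energy. -/
theorem stmt_14 (α : ℝ) (hα0 : 0 < α) (hα1 : α ≤ 1)
    (C₀ : ℝ) (hC₀ : 0 < C₀) (ψ : ℕ → ℝ) (hψpos : ∀ n : ℕ, 1 ≤ n → 0 < ψ n)
    (A : ℕ → Set (List Bool)) (hA : ∀ n : ℕ, ∀ v ∈ A n, v.length = n)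
    (hK : ∃ N : ℕ, 2 ≤ N ∧ ∀ n : ℕ, N ≤ n →
      ψ n + ((A n).ncard : ℝ) ≤ (Nat.ceil ((n : ℝ) * Real.log n ^ α) : ℝ))
    (a : List Bool → ℝ) (hapos : ∀ v : List Bool, v ≠ [] → 0 < a v)
    (haC₀ : ∀ v : List Bool, v ≠ [] → a v ≤ C₀)
    (haψ : ∀ n : ℕ, 1 ≤ n → ∀ v : List Bool, v.length = n → v ∉ A n →
      a v ≤ ψ n / 2 ^ n) :
    ¬ ∃ f : List Bool → ℝ,
        (∀ v : List Bool, v ≠ [] → f v = f (v ++ [true]) + f (v ++ [false])) ∧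
        f [true] + f [false] = 1 ∧
        (∑' v : {l : List Bool // l ≠ []}, ENNReal.ofReal (f v.1 ^ 2 / a v.1)) < ⊤ :=
  stmt_14_general α hα1 C₀ ψ hψpos A hA hK a hapos haC₀ haψ
end

section
/- For every real α > 1 there exist a set A of edges of the rooted infinite binary tree, a vertex x, and a real-valued function f on the nonempty strings such that: (1) |A ∩ E_n| ≤ ⌈n (log n)^α⌉ for every n ≥ 2; (2) f(v) = 0 whenever the parent edge of v does not belong to A; (3) f(v) equals the sum of f over the two children of v for every nonempty string v ≠ x, and the sum of f over the two children of the root equals 0 if x is not the root; (4) the sum of f over the two children of x equals f(x) + 1 (with f(x) interpreted as 0 if x is the root); and (5) ∑_v f(v)² < ∞. -/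
/-!
Let `h : ℕ → ℕ` start at `0` and grow by at most one per level. The strings whose letter at
position `i` is `true` only when `h` grows at level `i` form a subtree with at most `2 ^ h n`
vertices at depth `n`; a unit of flow spread evenly over it puts `2 ^ (-h n)` on each of them,
so the flow is conserved and its energy is at most `∑ n, 2 ^ (-h n)`.

Choosing `h` greedily, `h (n + 1) = min (h n + 1) (log₂ c (n + 1))` with `c n ≈ n (log n) ^ α`,
keeps `2 ^ h n ≤ c n` while `2 ^ (-h (n + 1)) ≤ 2 ^ (-h n) / 2 + 2 / c (n + 1)`, so the energy is
finite because `∑ 1 / (n (log n) ^ α) < ∞` (Cauchy condensation).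
-/

open Real Filter Finset

lemma summable_of_succ_le_mul_add {a b : ℕ → ℝ} {r : ℝ} (ha : ∀ n, 0 ≤ a n) (hb : ∀ n, 0 ≤ b n)
    (hb_sum : Summable b) (hr₀ : 0 ≤ r) (hr₁ : r < 1) (hab : ∀ n, a (n + 1) ≤ r * a n + b n) :
    Summable a := by
  have hbound : ∀ N, ∑ i ∈ range (N + 1), a i ≤ (a 0 + ∑' n, b n) / (1 - r) := fun N => by
    have hrec : ∑ i ∈ range (N + 1), a i ≤ a 0 + r * ∑ i ∈ range N, a i + ∑ i ∈ range N, b i := by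
      rw [sum_range_succ', mul_sum, add_comm (∑ i ∈ range N, a (i + 1)), add_assoc,
        ← sum_add_distrib]
      gcongr with i
      exact hab i
    have hmono : ∑ i ∈ range N, a i ≤ ∑ i ∈ range (N + 1), a i :=
      sum_le_sum_of_subset_of_nonneg (range_subset_range.2 N.le_succ) fun i _ _ => ha i
    have htail : ∑ i ∈ range N, b i ≤ ∑' n, b n := hb_sum.sum_le_tsum _ fun i _ => hb i
    rw [le_div_iff₀ (sub_pos.2 hr₁)]
    nlinarith
  exact summable_of_sum_range_le ha fun N =>
    (sum_le_sum_of_subset_of_nonneg (range_subset_range.2 N.le_succ) fun i _ _ => ha i).trans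
    (hbound N)

lemma summable_of_sum_fiber_le {ι : Type*} {g : ι → ℝ} (hg : ∀ i, 0 ≤ g i) (p : ι → ℕ)
    {b : ℕ → ℝ} (hb : Summable b)
    (hfiber : ∀ n (u : Finset ι), (∀ i ∈ u, p i = n) → ∑ i ∈ u, g i ≤ b n) :
    Summable g := by
  have hb_nonneg : ∀ n, 0 ≤ b n := fun n => by simpa using hfiber n ∅
  refine summable_of_sum_le (c := ∑' n, b n) hg fun u => ?_
  rw [← sum_fiberwise_of_maps_to fun i hi => mem_image_of_mem p hi]
  calc ∑ n ∈ u.image p, ∑ i ∈ u with p i = n, g i ≤ ∑ n ∈ u.image p, b n :=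
        sum_le_sum fun n _ => hfiber n _ fun i hi => (mem_filter.1 hi).2
    _ ≤ ∑' n, b n := hb.sum_le_tsum _ fun n _ => hb_nonneg n

lemma natCast_mul_log_rpow_pos {α : ℝ} {n : ℕ} (hn : 2 ≤ n) : 0 < (n : ℝ) * log n ^ α := by
  have := log_pos (by exact_mod_cast hn : (1 : ℝ) < n)
  positivity

lemma summable_inv_natCast_mul_log_rpow {α : ℝ} (hα : 1 < α) :
    Summable fun n : ℕ => ((n : ℝ) * log n ^ α)⁻¹ := by
  rw [← summable_condensed_iff_of_eventually_nonneg
    (Eventually.of_forall fun n => by have := log_natCast_nonneg n; positivity)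
    (eventually_atTop.2 ⟨2, fun n hn => inv_anti₀ (natCast_mul_log_rpow_pos hn) <| by
      have := log_natCast_nonneg n
      gcongr <;> norm_num⟩)]
  have hcond : ∀ k : ℕ, (2 : ℝ) ^ k * (((2 ^ k : ℕ) : ℝ) * log (2 ^ k : ℕ) ^ α)⁻¹ =
      (log 2 ^ α)⁻¹ * ((k : ℝ) ^ α)⁻¹ := fun k => by
    rw [Nat.cast_pow, Nat.cast_ofNat, log_pow, mul_rpow (Nat.cast_nonneg k) (log_nonneg one_le_two),
      mul_inv, ← mul_assoc, mul_inv_cancel₀ (by positivity), one_mul, mul_comm, mul_inv]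
  simp_rw [hcond]
  exact (summable_nat_rpow_inv.2 hα).mul_left _

def splitSchedule (c : ℕ → ℕ) : ℕ → ℕ
  | 0 => 0
  | n + 1 => min (splitSchedule c n + 1) (Nat.log 2 (c (n + 1)))

namespace splitSchedule

variable {c : ℕ → ℕ}

lemma le_log : ∀ n, splitSchedule c n ≤ Nat.log 2 (c n)
  | 0 => Nat.zero_le _
  | _ + 1 => min_le_right _ _

lemma pow_le {n : ℕ} (hc : c n ≠ 0) : 2 ^ splitSchedule c n ≤ c n :=
  (Nat.pow_le_pow_right two_pos (le_log n)).trans (Nat.pow_log_le_self 2 hc)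

lemma succ_eq_or (hc : Monotone c) (n : ℕ) :
    splitSchedule c (n + 1) = splitSchedule c n ∨
      splitSchedule c (n + 1) = splitSchedule c n + 1 := by
  have : splitSchedule c n ≤ Nat.log 2 (c (n + 1)) :=
    (le_log n).trans (Nat.log_mono_right (hc n.le_succ))
  rw [splitSchedule]
  omega

lemma summable_inv_two_pow (hc : ∀ n, c n ≠ 0) (hc_sum : Summable fun n => (c n : ℝ)⁻¹) :
    Summable fun n => ((2 : ℝ) ^ splitSchedule c n)⁻¹ := by
  refine summable_of_succ_le_mul_add (fun n => by positivity) (fun n => by positivity)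
    ((summable_nat_add_iff 1).2 hc_sum |>.mul_left 2) (by norm_num) (by norm_num : (2 : ℝ)⁻¹ < 1)
    fun n => ?_
  rcases min_choice (splitSchedule c n + 1) (Nat.log 2 (c (n + 1))) with hmin | hmin <;>
    rw [splitSchedule, hmin]
  · rw [pow_succ, mul_inv, mul_comm]
    exact le_add_of_nonneg_right (by positivity)
  · have hlt : (c (n + 1) : ℝ) < 2 * 2 ^ Nat.log 2 (c (n + 1)) := by
      rw [← pow_succ']
      exact_mod_cast Nat.lt_pow_succ_log_self one_lt_two _
    have hcpos : (0 : ℝ) < c (n + 1) := by exact_mod_cast Nat.pos_of_ne_zero (hc _)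
    refine le_add_of_nonneg_of_le (by positivity) ?_
    rw [inv_le_iff_one_le_mul₀ (by positivity)]
    field_simp
    linarith

end splitSchedule

section SplitTree

variable (h : ℕ → ℕ)

def splitTree : Set (List Bool) := {v | ∀ i, v[i]? = some true → h (i + 1) = h i + 1}

noncomputable def splitFlow : List Bool → ℝ :=
  (splitTree h).indicator fun v => ((2 : ℝ) ^ h v.length)⁻¹

variable {h}

lemma append_singleton_mem_splitTree {v : List Bool} {b : Bool} :
    v ++ [b] ∈ splitTree h ↔ v ∈ splitTree h ∧ (b = true → h (v.length + 1) = h v.length + 1) := by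
  simp only [splitTree, Set.mem_ofPred_eq]
  refine ⟨fun hv => ⟨fun i hi => hv i ?_, fun hb => hv _ ?_⟩, fun ⟨hv, hb⟩ i hi => ?_⟩
  · rwa [List.getElem?_append_left (List.getElem?_eq_some_iff.1 hi).1]
  · simpa using hb
  · rcases lt_trichotomy i v.length with hlt | rfl | hgt
    · exact hv i (by rwa [List.getElem?_append_left hlt] at hi)
    · exact hb (by simpa using hi)
    · simp [List.getElem?_eq_none (by simpa using hgt : (v ++ [b]).length ≤ i)] at hi

lemma splitFlow_nil (h0 : h 0 = 0) : splitFlow h [] = 1 := by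
  simp [splitFlow, splitTree, h0]

lemma splitFlow_eq_add (hstep : ∀ n, h (n + 1) = h n ∨ h (n + 1) = h n + 1) (v : List Bool) :
    splitFlow h v = splitFlow h (v ++ [true]) + splitFlow h (v ++ [false]) := by
  classical
  simp only [splitFlow, Set.indicator_apply, append_singleton_mem_splitTree, List.length_append,
    List.length_singleton]
  by_cases hv : v ∈ splitTree h
  · rcases hstep v.length with hs | hs
    · simp [hv, hs]
    · simp [hv, hs, pow_succ]
      ring
  · simp [hv]

lemma card_filter_range_split (h0 : h 0 = 0)
    (hstep : ∀ n, h (n + 1) = h n ∨ h (n + 1) = h n + 1) (n : ℕ) :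
    #{i ∈ range n | h (i + 1) = h i + 1} = h n := by
  induction n with
  | zero => simp [h0]
  | succ n ih =>
    rw [range_add_one, filter_insert]
    rcases hstep n with hs | hs
    · rw [if_neg (by omega), ih, hs]
    · rw [if_pos hs, card_insert_of_notMem (by simp), ih, hs]

lemma ncard_splitTree_level_le (h0 : h 0 = 0)
    (hstep : ∀ n, h (n + 1) = h n ∨ h (n + 1) = h n + 1) (n : ℕ) :
    (splitTree h ∩ {v | v.length = n}).ncard ≤ 2 ^ h n := by
  rw [← card_filter_range_split h0 hstep n, ← card_powerset, ← Set.ncard_coe_finset]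
  refine Set.ncard_le_ncard_of_injOn (fun v => {i ∈ range n | v[i]? = some true})
    (fun v ⟨hv, _⟩ => ?_) (fun v ⟨_, hv⟩ w ⟨_, hw⟩ hvw => ?_) (finite_toSet _)
  · simp only [coe_powerset, Set.mem_preimage, Set.mem_powerset_iff, coe_subset]
    intro i hi
    simp only [mem_filter] at hi ⊢
    exact ⟨hi.1, hv i hi.2⟩
  · simp only [Set.mem_ofPred_eq] at hv hw
    refine List.ext_getElem (hv.trans hw.symm) fun i hiv hiw => ?_
    have := Finset.ext_iff.1 hvw i
    simp only [mem_filter, mem_range, List.getElem?_eq_getElem hiv, List.getElem?_eq_getElem hiw,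
      Option.some.injEq, hv ▸ hiv, true_and] at this
    rwa [Bool.eq_iff_iff]

lemma summable_splitFlow_sq (h0 : h 0 = 0) (hstep : ∀ n, h (n + 1) = h n ∨ h (n + 1) = h n + 1)
    (hsum : Summable fun n => ((2 : ℝ) ^ h n)⁻¹) :
    Summable fun v => splitFlow h v ^ 2 := by
  classical
  refine summable_of_sum_fiber_le (fun v => sq_nonneg _) List.length hsum fun n u hu => ?_
  have hcard : #{v ∈ u | v ∈ splitTree h} ≤ 2 ^ h n := by
    refine le_trans ?_ (ncard_splitTree_level_le h0 hstep n)
    rw [← Set.ncard_coe_finset]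
    refine Set.ncard_le_ncard (fun v hv => ?_) ((List.finite_length_eq Bool n).subset
      Set.inter_subset_right)
    simp only [coe_filter, Set.mem_ofPred_eq] at hv
    exact ⟨hv.2, hu v hv.1⟩
  calc ∑ v ∈ u, splitFlow h v ^ 2 = ∑ v ∈ u with v ∈ splitTree h, (((2 : ℝ) ^ h n)⁻¹) ^ 2 := by
        rw [sum_filter]
        refine sum_congr rfl fun v hv => ?_
        simp [splitFlow, Set.indicator_apply, hu v hv]
    _ ≤ 2 ^ h n * (((2 : ℝ) ^ h n)⁻¹) ^ 2 := by
        rw [sum_const, nsmul_eq_mul]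
        gcongr
        exact_mod_cast hcard
    _ = ((2 : ℝ) ^ h n)⁻¹ := by field_simp

end SplitTree

noncomputable def levelBudget (α : ℝ) (n : ℕ) : ℕ := max 1 ⌈(n : ℝ) * log n ^ α⌉₊

lemma levelBudget_ne_zero (α : ℝ) (n : ℕ) : levelBudget α n ≠ 0 :=
  (lt_max_of_lt_left one_pos).ne'

lemma levelBudget_of_two_le {α : ℝ} {n : ℕ} (hn : 2 ≤ n) :
    levelBudget α n = ⌈(n : ℝ) * log n ^ α⌉₊ :=
  max_eq_right (Nat.one_le_ceil_iff.2 (natCast_mul_log_rpow_pos hn))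

lemma monotone_levelBudget {α : ℝ} (hα : 0 ≤ α) : Monotone (levelBudget α) := fun m n hmn => by
  have := log_natCast_nonneg m
  have : log m ≤ log n := by
    rcases m.eq_zero_or_pos with rfl | hm
    · simpa using log_natCast_nonneg n
    · exact log_le_log (by exact_mod_cast hm) (by exact_mod_cast hmn)
  unfold levelBudget
  gcongr

lemma summable_inv_levelBudget {α : ℝ} (hα : 1 < α) :
    Summable fun n => (levelBudget α n : ℝ)⁻¹ := by
  refine Summable.of_norm_bounded_eventually_nat (summable_inv_natCast_mul_log_rpow hα) ?_
  filter_upwards [eventually_ge_atTop 2] with n hn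
  rw [levelBudget_of_two_le hn, norm_inv, Real.norm_natCast]
  exact inv_anti₀ (natCast_mul_log_rpow_pos hn) (Nat.le_ceil _)

/-- Theorem 1.5(ii), flow formulation: for every `α > 1` there exist a set `A` of edges
of the rooted infinite binary tree (an edge being identified with the nonempty binary
string it leads to), a vertex `x`, and a unit flow `f` from `x` supported on `A`, of
finite energy for unit conductances, such that `|A ∩ E n| ≤ ⌈n (log n)^α⌉` for every
`n ≥ 2`. -/
theorem stmt_15 (α : ℝ) (hα : 1 < α) :
    ∃ (A : Set (List Bool)) (x : List Bool) (f : List Bool → ℝ),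
      (∀ n : ℕ, 2 ≤ n →
        (A ∩ {v : List Bool | v.length = n}).ncard ≤
          Nat.ceil ((n : ℝ) * Real.log n ^ α)) ∧
      (∀ v : List Bool, v ≠ [] → v ∉ A → f v = 0) ∧
      (∀ v : List Bool, v ≠ [] → v ≠ x → f v = f (v ++ [true]) + f (v ++ [false])) ∧
      (x ≠ [] → f [true] + f [false] = 0) ∧
      (f (x ++ [true]) + f (x ++ [false]) = (if x = [] then 0 else f x) + 1) ∧
      Summable (fun v : {l : List Bool // l ≠ []} => f v.1 ^ 2) := by
  set h := splitSchedule (levelBudget α)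
  have h0 : h 0 = 0 := rfl
  have hstep : ∀ n, h (n + 1) = h n ∨ h (n + 1) = h n + 1 :=
    splitSchedule.succ_eq_or (monotone_levelBudget (zero_le_one.trans hα.le))
  have hsum : Summable fun n => ((2 : ℝ) ^ h n)⁻¹ :=
    splitSchedule.summable_inv_two_pow (levelBudget_ne_zero α) (summable_inv_levelBudget hα)
  refine ⟨splitTree h, [], splitFlow h, fun n hn => ?_, fun v _ hv => Set.indicator_of_notMem hv _,
    fun v _ _ => splitFlow_eq_add hstep v, fun hx => (hx rfl).elim, ?_,
    (summable_splitFlow_sq h0 hstep hsum).subtype _⟩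
  · calc (splitTree h ∩ {v | v.length = n}).ncard ≤ 2 ^ h n := ncard_splitTree_level_le h0 hstep n
      _ ≤ levelBudget α n := splitSchedule.pow_le (levelBudget_ne_zero α n)
      _ = ⌈(n : ℝ) * log n ^ α⌉₊ := levelBudget_of_two_le hn
  · rw [if_pos rfl, zero_add, ← splitFlow_eq_add hstep, splitFlow_nil h0]
end
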